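/- Up to isomorphism there are exactly three questions for the full two-peg Mastermind state with one additional color: for every integer n ≥ 2 and every q = (q₁,q₂) ∈ (Fin (n+1))² with (q₁,q₂) ≠ (n,n), there exist a permutation π of Fin (n+1) with π(n) = n (so π restricts to a permutation of the secret colors {0,…,n−1}) and a choice of whether to swap the two coordinates, such that the resulting image of q is one of (0,0), (0,1), or (0,n). -/

import Mathlib

/-!
A question is determined up to isomorphism by which of its two colors are the additional color and
whether its two colors coincide. The permutations of the colors fixing the additional color act
transitively on secret colors and on ordered pairs of distinct secret colors, which leaves the
representatives `(0,0)` (one secret color twice), `(0,1)` (two distinct secret colors) and `(0,n)`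
(a secret and the additional color, swapping the pegs if needed); `(n,n)` is excluded. Two distinct
secret colors can only occur when `n ≥ 2`, so `(0,1)` is then a pair of secret colors.
-/

open Equiv

section PermFixing

variable {α : Type*} [DecidableEq α] {e a b c d : α}

theorem exists_perm_fixing_apply_eq (ha : a ≠ e) (hc : c ≠ e) :
    ∃ π : Perm α, π e = e ∧ π a = c :=
  ⟨swap a c, swap_apply_of_ne_of_ne ha.symm hc.symm, swap_apply_left a c⟩

theorem exists_perm_fixing_apply_eq_apply_eq (ha : a ≠ e) (hb : b ≠ e) (hc : c ≠ e)
    (hd : d ≠ e) (hab : a ≠ b) (hcd : c ≠ d) :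
    ∃ π : Perm α, π e = e ∧ π a = c ∧ π b = d := by
  set b' := swap a c b
  have hb'e : b' ≠ e := by
    rwa [Ne, ← swap_apply_of_ne_of_ne ha.symm hc.symm, (swap a c).apply_eq_iff_eq]
  have hb'c : b' ≠ c := by
    rwa [Ne, ← swap_apply_left a c, (swap a c).apply_eq_iff_eq, eq_comm]
  refine ⟨(swap a c).trans (swap b' d), ?_, ?_, swap_apply_left b' d⟩
  · rw [trans_apply, swap_apply_of_ne_of_ne ha.symm hc.symm,
      swap_apply_of_ne_of_ne hb'e.symm hd.symm]
  · rw [trans_apply, swap_apply_left, swap_apply_of_ne_of_ne hb'c.symm hcd]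

end PermFixing

theorem mm2_three_nonisomorphic_questions_general (n : ℕ)
    (q : Fin (n + 1) × Fin (n + 1)) (hq : q ≠ (Fin.last n, Fin.last n)) :
    ∃ (π : Equiv.Perm (Fin (n + 1))) (swap : Bool),
      π (Fin.last n) = Fin.last n ∧
      (fun t : Fin (n + 1) × Fin (n + 1) => (π t.1, π t.2))
          (if swap then (q.2, q.1) else q) ∈
        ({((0 : Fin (n + 1)), (0 : Fin (n + 1))), (0, 1), (0, Fin.last n)} :
          Set (Fin (n + 1) × Fin (n + 1))) := by
  obtain ⟨a, b⟩ := q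
  have h0 : (0 : Fin (n + 1)) ≠ Fin.last n := by
    intro h
    obtain rfl : n = 0 := by simpa using congrArg Fin.val h.symm
    exact hq (Subsingleton.elim (α := Fin 1 × Fin 1) _ _)
  by_cases ha : a = Fin.last n
  · subst ha
    have hb : b ≠ Fin.last n := fun hb => hq (by rw [hb])
    obtain ⟨π, hπe, hπb⟩ := exists_perm_fixing_apply_eq hb h0
    exact ⟨π, true, hπe, by simp [hπe, hπb]⟩
  by_cases hb : b = Fin.last n
  · subst hb
    obtain ⟨π, hπe, hπa⟩ := exists_perm_fixing_apply_eq ha h0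
    exact ⟨π, false, hπe, by simp [hπe, hπa]⟩
  by_cases hab : a = b
  · subst hab
    obtain ⟨π, hπe, hπa⟩ := exists_perm_fixing_apply_eq ha h0
    exact ⟨π, false, hπe, by simp [hπa]⟩
  obtain ⟨m, rfl⟩ : ∃ m, n = m + 2 := ⟨n - 2, by
    have := Fin.val_lt_last ha; have := Fin.val_lt_last hb; have := Fin.val_ne_of_ne hab
    omega⟩
  obtain ⟨π, hπe, hπa, hπb⟩ := exists_perm_fixing_apply_eq_apply_eq ha hb h0
    Fin.one_lt_last.ne hab Fin.zero_ne_one'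
  exact ⟨π, false, hπe, by simp [hπa, hπb]⟩

/-- Up to isomorphism there are exactly three questions for the full two-peg
Mastermind state with one additional color: for every `n ≥ 2` and every
question `q ∈ (Fin (n+1))²` other than `(n,n)` (the pair of additional colors),
there are a permutation `π` of the `n+1` colors fixing the additional color `n`
(hence restricting to a permutation of the secret colors `{0,…,n−1}`) and a
choice `swap` of whether to exchange the two peg positions, such that the
resulting image of `q` is one of `(0,0)`, `(0,1)`, `(0,n)`. -/
theorem mm2_three_nonisomorphic_questions (n : ℕ) (hn : 2 ≤ n)
    (q : Fin (n + 1) × Fin (n + 1)) (hq : q ≠ (Fin.last n, Fin.last n)) :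
    ∃ (π : Equiv.Perm (Fin (n + 1))) (swap : Bool),
      π (Fin.last n) = Fin.last n ∧
      (fun t : Fin (n + 1) × Fin (n + 1) => (π t.1, π t.2))
          (if swap then (q.2, q.1) else q) ∈
        ({((0 : Fin (n + 1)), (0 : Fin (n + 1))), (0, 1), (0, Fin.last n)} :
          Set (Fin (n + 1) × Fin (n + 1))) :=
  mm2_three_nonisomorphic_questions_general n q hq
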